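/- Let $(h^\star, k^\star)$ be independent standard Gaussian random variables and set $y = h^\star k^\star$. Let $G$ be a random variable that is measurable with respect to $(y, W)$ where $W$ is independent of $(h^\star, k^\star)$, and assume $h^\star G$ is integrable. Then $\mathbb{E}[h^\star G] = 0$. -/

import Mathlib

open MeasureTheory ProbabilityTheory

/-- Sign-flip symmetry lemma: if `h⋆, k⋆` are independent standard Gaussians,
`y = h⋆ k⋆`, and `G = g(y, W)` is measurable with respect to `(y, W)` for some `W`
independent of `(h⋆, k⋆)`, with `h⋆ G` integrable, then `𝔼[h⋆ G] = 0`. -/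
theorem stmt13 {Ω E : Type*} [MeasurableSpace Ω] [MeasurableSpace E]
    (P : Measure Ω) [IsProbabilityMeasure P]
    (hstar kstar : Ω → ℝ) (hmh : Measurable hstar) (hmk : Measurable kstar)
    (hgh : Measure.map hstar P = gaussianReal 0 1)
    (hgk : Measure.map kstar P = gaussianReal 0 1)
    (hindhk : IndepFun hstar kstar P)
    (W : Ω → E) (hmW : Measurable W)
    (hindW : IndepFun (fun ω => (hstar ω, kstar ω)) W P)
    (g : ℝ × E → ℝ) (hg : Measurable g)
    (hint : Integrable (fun ω => hstar ω * g (hstar ω * kstar ω, W ω)) P) :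
    ∫ ω, hstar ω * g (hstar ω * kstar ω, W ω) ∂P = 0 := by
  set G : Measure ℝ := gaussianReal 0 1 with hG
  -- joint law
  set ν : Measure ((ℝ × ℝ) × E) :=
    Measure.map (fun ω => ((hstar ω, kstar ω), W ω)) P with hν
  have hpairmeas : Measurable (fun ω => (hstar ω, kstar ω)) := hmh.prodMk hmk
  have hjoint : ν = (G.prod G).prod (Measure.map W P) := by
    rw [hν,
      (indepFun_iff_map_prod_eq_prod_map_map hpairmeas.aemeasurable hmW.aemeasurable).mp hindW,
      (indepFun_iff_map_prod_eq_prod_map_map hmh.aemeasurable hmk.aemeasurable).mp hindhk,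
      hgh, hgk]
  -- negation invariance of the gaussian
  have hneg : Measure.map (fun x : ℝ => -x) G = G := by
    have := gaussianReal_map_const_mul (μ := 0) (v := 1) (-1)
    simpa using this
  -- the sign-flip map
  set T : (ℝ × ℝ) × E → (ℝ × ℝ) × E :=
    Prod.map (Prod.map (fun x : ℝ => -x) (fun x : ℝ => -x)) id with hT
  have hmT : Measurable T := ((measurable_neg.prodMap measurable_neg).prodMap measurable_id)
  have hTinv : Measure.map T ν = ν := by
    rw [hjoint, hT, ← Measure.map_prod_map _ _ (measurable_neg.prodMap measurable_neg)
      measurable_id, ← Measure.map_prod_map _ _ measurable_neg measurable_neg,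
      hneg, Measure.map_id]
  -- the integrand as a function on the product space
  set F : (ℝ × ℝ) × E → ℝ := fun x => x.1.1 * g (x.1.1 * x.1.2, x.2) with hF
  have hmF : Measurable F :=
    (measurable_fst.fst).mul
      (hg.comp ((measurable_fst.fst.mul measurable_fst.snd).prodMk measurable_snd))
  have hcomp : ∀ ω, (fun ω => hstar ω * g (hstar ω * kstar ω, W ω)) ω
      = F ((hstar ω, kstar ω), W ω) := fun ω => rfl
  have h1 : ∫ ω, hstar ω * g (hstar ω * kstar ω, W ω) ∂P = ∫ x, F x ∂ν := by
    rw [hν, integral_map (hpairmeas.prodMk hmW).aemeasurable hmF.aestronglyMeasurable]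
  have h2 : ∫ x, F x ∂ν = ∫ x, F (T x) ∂ν := by
    conv_lhs => rw [← hTinv]
    rw [integral_map hmT.aemeasurable hmF.aestronglyMeasurable]
  have h3 : ∀ x, F (T x) = - F x := by
    intro ⟨⟨a, b⟩, w⟩
    simp [hF, hT, neg_mul_neg]
  rw [h1]
  have : ∫ x, F x ∂ν = - ∫ x, F x ∂ν := by
    conv_lhs => rw [h2]
    simp_rw [h3]
    exact integral_neg F
  linarith
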